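/- arXiv:2407.19374 — 2 statements merged into one kernel-verified Lean document; each statement's English description precedes it below -/
import Mathlib

section
/- Let a be an integer, p a prime, k ≥ 2 an even integer, and define the sequence β by β₀ = 1, β₁ = a, and β_{m+1} = a·β_m − p^{k−1}·β_{m−1} for m ≥ 1. Then for all m ≥ 0, β_m = (1/2^m) · Σ_{j=0}^{⌊m/2⌋} Σ_{i=j}^{⌊m/2⌋} C(m+1, 2i+1)·C(i, j)·(−4)^j·a^{m−2j}·p^{(k−1)j}, where C(·,·) denotes binomial coefficients. -/
/-!
With `q = p ^ (k - 1)` and `D = a² - 4q`, the element `α = a + √D` of `ℤ√D` is a root of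
`X² - 2aX + 4q`, so `n ↦ 2ⁿ βₙ` and `n ↦ Im (α ^ (n + 1))` satisfy the same second-order linear
recurrence with the same initial values. The binomial theorem gives
`Im (α ^ (n + 1)) = ∑ᵢ C(n+1, 2i+1) a^(n-2i) Dⁱ`; expanding `Dⁱ = (a² - 4q)ⁱ` once more and
swapping the two sums yields the formula.
-/

open Finset

theorem Finset.sum_range_eq_sum_odd_of_even_eq_zero {M : Type*} [AddCommMonoid M] {f : ℕ → M}
    (hf : ∀ i, f (2 * i) = 0) (n : ℕ) :
    ∑ k ∈ range n, f k = ∑ i ∈ range (n / 2), f (2 * i + 1) := by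
  rw [← sum_image (g := fun i ↦ 2 * i + 1) (by intro i _ j _ h; simp only at h; omega)]
  refine (sum_subset (fun k hk ↦ ?_) fun k hk hk' ↦ ?_).symm
  · obtain ⟨i, hi, rfl⟩ := mem_image.mp hk
    simp only [mem_range] at hi ⊢
    omega
  · obtain ⟨i, rfl | rfl⟩ := Nat.even_or_odd' k
    · exact hf i
    · exact absurd (mem_image.mpr ⟨i, by simp only [mem_range] at hk ⊢; omega, rfl⟩) hk'

namespace Zsqrtd

variable {d : ℤ}

theorem im_sum {ι : Type*} (s : Finset ι) (f : ι → ℤ√d) :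
    (∑ i ∈ s, f i).im = ∑ i ∈ s, (f i).im :=
  map_sum (AddMonoidHom.mk' im im_add) f s

theorem sqrtd_pow_two_mul (i : ℕ) : (sqrtd : ℤ√d) ^ (2 * i) = ((d ^ i : ℤ) : ℤ√d) := by
  rw [pow_mul, sq, dmuld, Int.cast_pow]

theorem im_sqrtd_pow_mul_intCast (k : ℕ) (c : ℤ) :
    ((sqrtd : ℤ√d) ^ k * c).im = if Even k then 0 else d ^ (k / 2) * c := by
  obtain ⟨i, rfl | rfl⟩ := Nat.even_or_odd' k
  · rw [sqrtd_pow_two_mul, ← Int.cast_mul, im_intCast, if_pos (even_two_mul i)]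
  · rw [pow_succ, sqrtd_pow_two_mul, mul_assoc, im_smul, if_neg (Nat.not_even_two_mul_add_one i),
      show (2 * i + 1) / 2 = i by omega]
    simp

theorem im_intCast_add_sqrtd_pow (a : ℤ) (n : ℕ) :
    (((a : ℤ√d) + sqrtd) ^ (n + 1)).im =
      ∑ i ∈ range (n / 2 + 1), ((n + 1).choose (2 * i + 1) : ℤ) * a ^ (n - 2 * i) * d ^ i := by
  have hterm : ∀ k, ((sqrtd : ℤ√d) ^ k * (a : ℤ√d) ^ (n + 1 - k) * ((n + 1).choose k : ℤ√d)).im =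
      if Even k then 0 else d ^ (k / 2) * (a ^ (n + 1 - k) * (n + 1).choose k) := fun k ↦ by
    rw [mul_assoc, ← im_sqrtd_pow_mul_intCast]
    push_cast
    rfl
  rw [add_comm, add_pow, im_sum, sum_congr rfl fun k _ ↦ hterm k,
    sum_range_eq_sum_odd_of_even_eq_zero (by simp), show (n + 1 + 1) / 2 = n / 2 + 1 by omega]
  refine sum_congr rfl fun i _ ↦ ?_
  rw [if_neg (Nat.not_even_two_mul_add_one i), show (2 * i + 1) / 2 = i by omega,
    show n + 1 - (2 * i + 1) = n - 2 * i by omega]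
  ring

end Zsqrtd

theorem two_pow_mul_eq_im_intCast_add_sqrtd_pow {a q : ℤ} {β : ℕ → ℤ} (h0 : β 0 = 1)
    (h1 : β 1 = a) (hrec : ∀ n, β (n + 2) = a * β (n + 1) - q * β n) (n : ℕ) :
    2 ^ n * β n = (((a : Zsqrtd (a ^ 2 - 4 * q)) + Zsqrtd.sqrtd) ^ (n + 1)).im := by
  set α := (a : Zsqrtd (a ^ 2 - 4 * q)) + Zsqrtd.sqrtd
  have hα : α ^ 2 = 2 * a * α - 4 * q := by
    have hd := Zsqrtd.dmuld (d := a ^ 2 - 4 * q)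
    push_cast at hd
    linear_combination hd
  let E : LinearRecurrence ℤ := ⟨2, ![-(4 * q), 2 * a]⟩
  have hE : ∀ u : ℕ → ℤ, (∀ n, u (n + 2) = 2 * a * u (n + 1) - 4 * q * u n) → E.IsSolution u :=
    fun u hu n ↦ by simpa [E, Fin.sum_univ_two, sub_eq_neg_add] using hu n
  have hβ : E.IsSolution fun n ↦ 2 ^ n * β n := hE _ fun n ↦ by
    rw [hrec]
    ring
  have hα' : E.IsSolution fun n ↦ (α ^ (n + 1)).im := hE _ fun n ↦ by
    have : α ^ (n + 2 + 1) = 2 * a * α ^ (n + 1 + 1) - 4 * q * α ^ (n + 1) := by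
      linear_combination α ^ (n + 1) * hα
    simp [this]
  refine congrFun ((E.eq_iff_eqOn_range_order _ _ hβ hα').mpr fun i hi ↦ ?_) n
  obtain rfl | rfl : i = 0 ∨ i = 1 := by simp only [E, coe_range, Set.mem_Iio] at hi; omega
  · simp [h0, α]
  · simp [h1, hα, α]

theorem sum_choose_mul_pow_mul_sq_sub_pow {R : Type*} [CommRing R] (x y : R) (m : ℕ) :
    ∑ i ∈ range (m / 2 + 1),
        ((m + 1).choose (2 * i + 1) : R) * x ^ (m - 2 * i) * (x ^ 2 - 4 * y) ^ i =
      ∑ j ∈ range (m / 2 + 1), ∑ i ∈ Icc j (m / 2),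
        ((m + 1).choose (2 * i + 1) : R) * (i.choose j : R) * (-4) ^ j * x ^ (m - 2 * j) * y ^ j := by
  have hexpand : ∀ i ∈ range (m / 2 + 1),
      ((m + 1).choose (2 * i + 1) : R) * x ^ (m - 2 * i) * (x ^ 2 - 4 * y) ^ i =
        ∑ j ∈ range (i + 1),
          ((m + 1).choose (2 * i + 1) : R) * (i.choose j : R) * (-4) ^ j * x ^ (m - 2 * j) * y ^ j := by
    intro i hi
    rw [sub_eq_neg_add, add_pow, mul_sum]
    refine sum_congr rfl fun j hj ↦ ?_
    have hx : x ^ (m - 2 * i) * (x ^ 2) ^ (i - j) = x ^ (m - 2 * j) := by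
      rw [← pow_mul, ← pow_add]
      congr 1
      simp only [mem_range] at hi hj
      omega
    rw [← hx]
    ring
  rw [sum_congr rfl hexpand]
  exact sum_comm' fun i j ↦ by simp only [mem_range, mem_Icc]; omega

theorem stmt0_general (a : ℤ) (p k : ℕ)
    (β : ℕ → ℤ) (hβ0 : β 0 = 1) (hβ1 : β 1 = a)
    (hrec : ∀ m, 1 ≤ m → β (m + 1) = a * β m - (p : ℤ) ^ (k - 1) * β (m - 1)) :
    ∀ m, (2 : ℤ) ^ m * β m =
      ∑ j ∈ Finset.range (m / 2 + 1), ∑ i ∈ Finset.Icc j (m / 2),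
        ((m + 1).choose (2 * i + 1) : ℤ) * (i.choose j : ℤ) * (-4) ^ j *
          a ^ (m - 2 * j) * (p : ℤ) ^ ((k - 1) * j) := by
  intro m
  rw [two_pow_mul_eq_im_intCast_add_sqrtd_pow hβ0 hβ1 (fun n ↦ hrec (n + 1) n.succ_pos) m,
    Zsqrtd.im_intCast_add_sqrtd_pow, sum_choose_mul_pow_mul_sq_sub_pow]
  simp_rw [← pow_mul]

theorem stmt0 (a : ℤ) (p k : ℕ) (hp : p.Prime) (hk : 2 ≤ k) (hke : Even k)
    (β : ℕ → ℤ) (hβ0 : β 0 = 1) (hβ1 : β 1 = a)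
    (hrec : ∀ m, 1 ≤ m → β (m + 1) = a * β m - (p : ℤ) ^ (k - 1) * β (m - 1)) :
    ∀ m, (2 : ℤ) ^ m * β m =
      ∑ j ∈ Finset.range (m / 2 + 1), ∑ i ∈ Finset.Icc j (m / 2),
        ((m + 1).choose (2 * i + 1) : ℤ) * (i.choose j : ℤ) * (-4) ^ j *
          a ^ (m - 2 * j) * (p : ℤ) ^ ((k - 1) * j) :=
  stmt0_general a p k β hβ0 hβ1 hrec
end

section
/- For all integers m ≥ 0 and all j with 0 ≤ j ≤ ⌊m/2⌋, the integer 2^{m−2j} divides Σ_{i=j}^{⌊m/2⌋} C(m+1, 2i+1)·C(i, j). -/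
/-!
Write `O(n, j) = ∑ᵢ C(n, 2i+1) C(i, j)` and `E(n, j) = ∑ᵢ C(n, 2i) C(i, j)`. Pascal's rule, applied
to `C(n+1, ·)` and to `C(i+1, j+1)`, gives `O(n+1, j) = E(n, j) + O(n, j)` and
`E(n+1, j+1) = E(n, j+1) + O(n, j) + O(n, j+1)`, hence the Fibonacci-type recurrence
`O(n+2, j+1) = 2 O(n+1, j+1) + O(n, j)`, with `O(n+1, 0) = 2ⁿ`. It is solved by
`O(m+1, j) = 2^(m-2j) C(m-j, j)`, so the sum in question is exactly `2^(m-2j)` times a binomial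
coefficient.
-/

open Finset

theorem sum_range_two_mul {M : Type*} [AddCommMonoid M] (f : ℕ → M) (N : ℕ) :
    ∑ k ∈ range (2 * N), f k = ∑ i ∈ range N, (f (2 * i) + f (2 * i + 1)) := by
  induction N with
  | zero => simp
  | succ N ih => rw [Nat.mul_succ, sum_range_succ, sum_range_succ, sum_range_succ, ih, add_assoc]

/-- `E(n, j)` for `r = 0` and `O(n, j)` for `r = 1`; the range only bounds the terms that can be
nonzero. -/
def parityChooseSum (n r j : ℕ) : ℕ := ∑ i ∈ range (n + 1), n.choose (2 * i + r) * i.choose j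

theorem parityChooseSum_eq_sum_range {n r N : ℕ} (j : ℕ) (hN : n < 2 * N + r) :
    ∑ i ∈ range N, n.choose (2 * i + r) * i.choose j = parityChooseSum n r j := by
  have hvanish : ∀ i ≥ min N (n + 1), n.choose (2 * i + r) * i.choose j = 0 := fun i hi ↦ by
    rw [Nat.choose_eq_zero_of_lt (by omega), zero_mul]
  rw [parityChooseSum, eventually_constant_sum hvanish (min_le_left _ _),
    eventually_constant_sum hvanish (min_le_right _ _)]

theorem parityChooseSum_eq_zero {n r j : ℕ} (h : n < 2 * j + r) : parityChooseSum n r j = 0 :=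
  sum_eq_zero fun i _ ↦ by
    rcases lt_or_ge i j with hij | hij
    · rw [Nat.choose_eq_zero_of_lt hij, mul_zero]
    · rw [Nat.choose_eq_zero_of_lt (by omega), zero_mul]

theorem parityChooseSum_zero_zero_add_one_zero (n : ℕ) :
    parityChooseSum n 0 0 + parityChooseSum n 1 0 = 2 ^ n := by
  simp only [parityChooseSum, Nat.choose_zero_right, mul_one, add_zero, ← sum_add_distrib,
    ← sum_range_two_mul (n.choose ·)]
  rw [eventually_constant_sum (fun k hk ↦ Nat.choose_eq_zero_of_lt hk) (by omega),
    Nat.sum_range_choose]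

theorem parityChooseSum_succ_one (n j : ℕ) :
    parityChooseSum (n + 1) 1 j = parityChooseSum n 0 j + parityChooseSum n 1 j := by
  rw [← parityChooseSum_eq_sum_range j (N := n + 2) (by omega),
    ← parityChooseSum_eq_sum_range j (N := n + 2) (by omega),
    ← parityChooseSum_eq_sum_range j (N := n + 2) (by omega), ← sum_add_distrib]
  refine sum_congr rfl fun i _ ↦ ?_
  rw [Nat.choose_succ_succ, add_zero, add_mul]

theorem parityChooseSum_succ_zero_succ (n j : ℕ) :
    parityChooseSum (n + 1) 0 (j + 1)
      = parityChooseSum n 0 (j + 1) + parityChooseSum n 1 j + parityChooseSum n 1 (j + 1) := by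
  rw [parityChooseSum, ← parityChooseSum_eq_sum_range (j + 1) (N := n + 2) (by omega),
    ← parityChooseSum_eq_sum_range j (N := n + 1) (by omega),
    ← parityChooseSum_eq_sum_range (j + 1) (N := n + 1) (by omega),
    sum_range_succ' _ (n + 1), sum_range_succ' (fun i ↦ n.choose (2 * i + 0) * _) (n + 1)]
  simp only [Nat.choose_zero_succ, mul_zero, add_zero, ← sum_add_distrib]
  refine sum_congr rfl fun i _ ↦ ?_
  rw [show 2 * (i + 1) = 2 * i + 1 + 1 by ring, Nat.choose_succ_succ n (2 * i + 1),
    Nat.choose_succ_succ i j]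
  ring

theorem parityChooseSum_add_two_one_succ (n j : ℕ) :
    parityChooseSum (n + 2) 1 (j + 1)
      = 2 * parityChooseSum (n + 1) 1 (j + 1) + parityChooseSum n 1 j := by
  rw [parityChooseSum_succ_one (n + 1), parityChooseSum_succ_zero_succ,
    parityChooseSum_succ_one n]
  ring

theorem parityChooseSum_one_zero (n : ℕ) : parityChooseSum (n + 1) 1 0 = 2 ^ n := by
  rw [parityChooseSum_succ_one, parityChooseSum_zero_zero_add_one_zero]

theorem parityChooseSum_add_two_mul_add_one_one (m j : ℕ) :
    parityChooseSum (m + 2 * j + 1) 1 j = 2 ^ m * (m + j).choose j := by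
  induction j generalizing m with
  | zero => simp [parityChooseSum_one_zero]
  | succ j ih =>
    have hrec (k : ℕ) : parityChooseSum (k + 2 * (j + 1) + 1) 1 (j + 1)
        = 2 * parityChooseSum (k + 2 * j + 1 + 1) 1 (j + 1) + 2 ^ k * (k + j).choose j := by
      rw [show k + 2 * (j + 1) + 1 = k + 2 * j + 1 + 2 by ring, parityChooseSum_add_two_one_succ, ih]
    induction m with
    | zero => rw [hrec, parityChooseSum_eq_zero (by omega)]; simp
    | succ m ihm =>
      rw [hrec, show m + 1 + 2 * j + 1 + 1 = m + 2 * (j + 1) + 1 by ring, ihm,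
        show m + 1 + (j + 1) = m + (j + 1) + 1 by ring, Nat.choose_succ_succ',
        show m + (j + 1) = m + 1 + j by ring]
      ring

theorem sum_Icc_choose_two_mul_add_one_mul_choose (m j : ℕ) :
    ∑ i ∈ Icc j (m / 2), (m + 1).choose (2 * i + 1) * i.choose j
      = 2 ^ (m - 2 * j) * (m - j).choose j := by
  have hsum : ∑ i ∈ Icc j (m / 2), (m + 1).choose (2 * i + 1) * i.choose j
      = parityChooseSum (m + 1) 1 j := by
    rw [← parityChooseSum_eq_sum_range j (N := m / 2 + 1) (by omega)]
    refine sum_subset (fun i hi ↦ by simp only [mem_Icc, mem_range] at hi ⊢; omega)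
      fun i hi hi' ↦ ?_
    simp only [mem_Icc, mem_range] at hi hi'
    rw [Nat.choose_eq_zero_of_lt (n := i) (by omega), mul_zero]
  rw [hsum]
  rcases le_or_gt (2 * j) m with hjm | hjm
  · obtain ⟨k, rfl⟩ : ∃ k, m = k + 2 * j := ⟨m - 2 * j, by omega⟩
    rw [parityChooseSum_add_two_mul_add_one_one, show k + 2 * j - 2 * j = k by omega,
      show k + 2 * j - j = k + j by omega]
  · rw [parityChooseSum_eq_zero (by omega), Nat.choose_eq_zero_of_lt (by omega), mul_zero]

theorem stmt4_general (m j : ℕ) :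
    2 ^ (m - 2 * j) ∣ ∑ i ∈ Finset.Icc j (m / 2), (m + 1).choose (2 * i + 1) * i.choose j :=
  Dvd.intro _ (sum_Icc_choose_two_mul_add_one_mul_choose m j).symm

theorem stmt4 (m j : ℕ) (hj : j ≤ m / 2) :
    2 ^ (m - 2 * j) ∣ ∑ i ∈ Finset.Icc j (m / 2), (m + 1).choose (2 * i + 1) * i.choose j :=
  stmt4_general m j
end
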